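/- Let S be a nonempty finite state space, let P and P̃ be row-stochastic matrices on S, let r : S → ℝ, γ ∈ [0,1), β ∈ [0,1], and λ ∈ [0,1). Let R = (1−λ)·∑_{j=1}^∞ λ^{j-1}·P̃^j be the exponential smoothing matrix. Then the exponentially smoothed temporally regularized Bellman operator T, defined by T v = r + γ·((1-β)·(P v) + β·(R v)), satisfies ‖T u − T v‖_∞ ≤ γ·‖u − v‖_∞ for all u, v : S → ℝ, and T has a unique fixed point. -/

import Mathlib

/-! The exponential smoothing matrix is a convex combination of the row-stochastic powers `P̃^j`,
hence row stochastic, and so is `Q = (1 - β) P + β R`. A row-stochastic matrix averages the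
entries of a vector, so it is a sup-norm contraction with constant `1`, which makes
`T v = r + γ Q v` a `γ`-contraction; Banach's fixed point theorem gives the unique fixed point. -/

open Matrix

theorem hasSum_expSmoothing_weights {lam : ℝ} (hlam0 : 0 ≤ lam) (hlam1 : lam < 1) :
    HasSum (fun k : ℕ => (1 - lam) * lam ^ k) 1 := by
  have h := (hasSum_geometric_of_lt_one hlam0 hlam1).mul_left (1 - lam)
  rwa [mul_inv_cancel₀ (sub_ne_zero.2 hlam1.ne')] at h

namespace Matrix

variable {n : Type*} [Fintype n] [DecidableEq n]

theorem norm_mulVec_le_of_mem_rowStochastic {M : Matrix n n ℝ} (hM : M ∈ rowStochastic ℝ n)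
    (v : n → ℝ) : ‖M *ᵥ v‖ ≤ ‖v‖ := by
  refine (pi_norm_le_iff_of_nonneg (norm_nonneg v)).2 fun i => ?_
  rw [Real.norm_eq_abs, mulVec, dotProduct]
  calc |∑ j, M i j * v j| ≤ ∑ j, |M i j * v j| := Finset.abs_sum_le_sum_abs _ _
    _ ≤ ∑ j, M i j * ‖v‖ := by
        gcongr with j
        rw [abs_mul, abs_of_nonneg (nonneg_of_mem_rowStochastic hM)]
        gcongr
        · exact nonneg_of_mem_rowStochastic hM
        · exact norm_le_pi_norm v j
    _ = ‖v‖ := by rw [← Finset.sum_mul, sum_row_of_mem_rowStochastic hM i, one_mul]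

variable {ι : Type*} {w : ι → ℝ} {M : ι → Matrix n n ℝ}

theorem summable_smul_of_mem_rowStochastic (hw0 : ∀ k, 0 ≤ w k) (hw : Summable w)
    (hM : ∀ k, M k ∈ rowStochastic ℝ n) : Summable fun k => w k • M k :=
  Pi.summable.2 fun _ => Pi.summable.2 fun _ =>
    hw.of_nonneg_of_le (fun k => mul_nonneg (hw0 k) (nonneg_of_mem_rowStochastic (hM k)))
      fun k => mul_le_of_le_one_right (hw0 k) (le_one_of_mem_rowStochastic (hM k))

theorem tsum_smul_mem_rowStochastic (hw0 : ∀ k, 0 ≤ w k) (hw : HasSum w 1)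
    (hM : ∀ k, M k ∈ rowStochastic ℝ n) : ∑' k, w k • M k ∈ rowStochastic ℝ n := by
  have hsum := summable_smul_of_mem_rowStochastic hw0 hw.summable hM
  have hentry : ∀ i j, (∑' k, w k • M k) i j = ∑' k, w k * M k i j := fun i j =>
    (congrFun (tsum_apply hsum) j).trans (tsum_apply (Pi.summable.1 hsum i))
  refine mem_rowStochastic_iff_sum.2 ⟨fun i j => ?_, fun i => ?_⟩
  · rw [hentry]
    exact tsum_nonneg fun k => mul_nonneg (hw0 k) (nonneg_of_mem_rowStochastic (hM k))
  · calc ∑ j, (∑' k, w k • M k) i j = ∑' k, ∑ j, w k * M k i j := by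
          simp_rw [hentry]
          exact (Summable.tsum_finsetSum fun j _ => Pi.summable.1 (Pi.summable.1 hsum i) j).symm
      _ = ∑' k, w k := by simp_rw [← Finset.mul_sum, sum_row_of_mem_rowStochastic (hM _), mul_one]
      _ = 1 := hw.tsum_eq

theorem expSmoothing_mem_rowStochastic {P : Matrix n n ℝ} (hP : P ∈ rowStochastic ℝ n)
    {lam : ℝ} (hlam0 : 0 ≤ lam) (hlam1 : lam < 1) :
    ∑' k : ℕ, ((1 - lam) * lam ^ k) • P ^ (k + 1) ∈ rowStochastic ℝ n :=
  tsum_smul_mem_rowStochastic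
    (fun k => mul_nonneg (sub_nonneg.2 hlam1.le) (pow_nonneg hlam0 k))
    (hasSum_expSmoothing_weights hlam0 hlam1) fun k => pow_mem hP (k + 1)

theorem norm_affine_mulVec_sub_le {Q : Matrix n n ℝ} (hQ : Q ∈ rowStochastic ℝ n) (r : n → ℝ)
    {γ : ℝ} (hγ : 0 ≤ γ) (u v : n → ℝ) :
    ‖(r + γ • Q *ᵥ u) - (r + γ • Q *ᵥ v)‖ ≤ γ * ‖u - v‖ := by
  rw [add_sub_add_left_eq_sub, ← smul_sub, ← mulVec_sub, norm_smul, Real.norm_of_nonneg hγ]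
  exact mul_le_mul_of_nonneg_left (norm_mulVec_le_of_mem_rowStochastic hQ _) hγ

end Matrix

theorem exp_smoothing_bellman_contraction_unique_fixed_point_general
    {S : Type*} [Fintype S] [DecidableEq S]
    (P Pt : Matrix S S ℝ)
    (hPnonneg : ∀ i j, 0 ≤ P i j) (hProw : ∀ i, ∑ j, P i j = 1)
    (hPtnonneg : ∀ i j, 0 ≤ Pt i j) (hPtrow : ∀ i, ∑ j, Pt i j = 1)
    (r : S → ℝ) (γ β lam : ℝ)
    (hγ0 : 0 ≤ γ) (hγ1 : γ < 1) (hβ0 : 0 ≤ β) (hβ1 : β ≤ 1)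
    (hlam0 : 0 ≤ lam) (hlam1 : lam < 1)
    (R : Matrix S S ℝ)
    (hR : R = ∑' k : ℕ, ((1 - lam) * lam ^ k) • Pt ^ (k + 1))
    (T : (S → ℝ) → (S → ℝ))
    (hT : ∀ v, T v = r + γ • ((1 - β) • P.mulVec v + β • R.mulVec v)) :
    (∀ u v : S → ℝ, ‖T u - T v‖ ≤ γ * ‖u - v‖) ∧ (∃! v : S → ℝ, T v = v) := by
  have hP := mem_rowStochastic_iff_sum.2 ⟨hPnonneg, hProw⟩
  have hRstoch : R ∈ rowStochastic ℝ S :=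
    hR ▸ expSmoothing_mem_rowStochastic (mem_rowStochastic_iff_sum.2 ⟨hPtnonneg, hPtrow⟩)
      hlam0 hlam1
  set Q := (1 - β) • P + β • R
  have hQ : Q ∈ rowStochastic ℝ S :=
    convex_rowStochastic hP hRstoch (sub_nonneg.2 hβ1) hβ0 (sub_add_cancel 1 β)
  have hTQ : ∀ v, T v = r + γ • Q *ᵥ v := fun v => by
    rw [hT, add_mulVec, smul_mulVec, smul_mulVec]
  have hcontr : ∀ u v : S → ℝ, ‖T u - T v‖ ≤ γ * ‖u - v‖ := fun u v => by
    rw [hTQ, hTQ]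
    exact norm_affine_mulVec_sub_le hQ r hγ0 u v
  have hT_contracting : ContractingWith ⟨γ, hγ0⟩ T :=
    ⟨hγ1, LipschitzWith.of_dist_le_mul fun u v => by
      rw [dist_eq_norm, dist_eq_norm]
      exact hcontr u v⟩
  exact ⟨hcontr, _, hT_contracting.fixedPoint_isFixedPt,
    fun _ hv => hT_contracting.fixedPoint_unique hv⟩

/-- The exponentially smoothed temporally regularized Bellman operator
`T v = r + γ • ((1-β) • (P v) + β • (R v))`, where `R = (1−λ) ∑_{j≥1} λ^{j-1} P̃^j`,
is a `γ`-contraction in sup norm and has a unique fixed point. -/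
theorem exp_smoothing_bellman_contraction_unique_fixed_point
    {S : Type*} [Fintype S] [Nonempty S] [DecidableEq S]
    (P Pt : Matrix S S ℝ)
    (hPnonneg : ∀ i j, 0 ≤ P i j) (hProw : ∀ i, ∑ j, P i j = 1)
    (hPtnonneg : ∀ i j, 0 ≤ Pt i j) (hPtrow : ∀ i, ∑ j, Pt i j = 1)
    (r : S → ℝ) (γ β lam : ℝ)
    (hγ0 : 0 ≤ γ) (hγ1 : γ < 1) (hβ0 : 0 ≤ β) (hβ1 : β ≤ 1)
    (hlam0 : 0 ≤ lam) (hlam1 : lam < 1)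
    (R : Matrix S S ℝ)
    (hR : R = ∑' k : ℕ, ((1 - lam) * lam ^ k) • Pt ^ (k + 1))
    (T : (S → ℝ) → (S → ℝ))
    (hT : ∀ v, T v = r + γ • ((1 - β) • P.mulVec v + β • R.mulVec v)) :
    (∀ u v : S → ℝ, ‖T u - T v‖ ≤ γ * ‖u - v‖) ∧ (∃! v : S → ℝ, T v = v) :=
  exp_smoothing_bellman_contraction_unique_fixed_point_general P Pt hPnonneg hProw hPtnonneg hPtrow
    r γ β lam hγ0 hγ1 hβ0 hβ1 hlam0 hlam1 R hR T hT
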